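/- Let G be an IB-homogeneous graph that represents m (some bimorphism maps a nonedge to an edge). Then for every finite subset X of G there exists a bimorphism F of G whose preimage of X (i.e., F⁻¹(X)) induces an independent set. -/

import Mathlib

/-- A bimorphism of a graph: a bijective edge-preserving self-map. -/
def IsBimorphism {V : Type*} (G : SimpleGraph V) (F : V → V) : Prop :=
  Function.Bijective F ∧ ∀ u v, G.Adj u v → G.Adj (F u) (F v)

/-- A partial isomorphism of `G` with finite domain `S`. -/
def IsPartialIso {V : Type*} (G : SimpleGraph V) (S : Finset V) (f : V → V) : Prop :=
  Set.InjOn f S ∧ ∀ u ∈ S, ∀ v ∈ S, (G.Adj u v ↔ G.Adj (f u) (f v))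

/-- `G` is IB-homogeneous: every isomorphism between finite induced subgraphs
extends to a bimorphism of `G`. -/
def IBHom {V : Type*} (G : SimpleGraph V) : Prop :=
  ∀ (S : Finset V) (f : V → V), IsPartialIso G S f →
    ∃ F : V → V, IsBimorphism G F ∧ ∀ x ∈ S, F x = f x

/-- `G` represents the monomorphism `m`: some bimorphism maps a nonedge to an edge. -/
def RepM {V : Type*} (G : SimpleGraph V) : Prop :=
  ∃ F : V → V, IsBimorphism G F ∧
    ∃ u v : V, u ≠ v ∧ ¬ G.Adj u v ∧ G.Adj (F u) (F v)

/-- An independent set: pairwise nonadjacent vertices. -/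
def IsIndep {V : Type*} (G : SimpleGraph V) (s : Set V) : Prop :=
  s.Pairwise fun u v => ¬ G.Adj u v

/-!
Passing to the complement swaps edges and non-edges and turns bimorphisms into their inverses,
so it suffices to map `X` onto a clique of `Gᶜ` by a bimorphism of `Gᶜ`. In a graph that is
IB-homogeneous and represents `m`, any single non-edge `uv` is sent to an edge by some
bimorphism: move `uv` onto the non-edge witnessing `m` by a partial isomorphism, extend, and
compose with the witness. Composing such bimorphisms strictly decreases the set of non-adjacent
pairs of `X`, until the image of `X` is a clique.
-/

section

variable {V : Type*} {G : SimpleGraph V}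

theorem isBimorphism_id : IsBimorphism G id :=
  ⟨Function.bijective_id, fun _ _ h => h⟩

theorem IsBimorphism.comp {F F' : V → V} (hF : IsBimorphism G F) (hF' : IsBimorphism G F') :
    IsBimorphism G (F ∘ F') :=
  ⟨hF.1.comp hF'.1, fun u v h => hF.2 _ _ (hF'.2 u v h)⟩

theorem IsBimorphism.compl_symm {e : V ≃ V} (he : IsBimorphism G e) :
    IsBimorphism Gᶜ e.symm := by
  refine ⟨e.symm.bijective, fun u v huv => ?_⟩
  rw [SimpleGraph.compl_adj] at huv ⊢
  refine ⟨e.symm.injective.ne huv.1, fun hadj => huv.2 ?_⟩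
  simpa using he.2 _ _ hadj

theorem IsPartialIso.compl {S : Finset V} {f : V → V} (hf : IsPartialIso G S f) :
    IsPartialIso Gᶜ S f := by
  refine ⟨hf.1, fun u hu v hv => ?_⟩
  by_cases huv : u = v
  · subst huv
    exact iff_of_false (Gᶜ.irrefl) (Gᶜ.irrefl)
  · have hfuv : f u ≠ f v := fun h => huv (hf.1 hu hv h)
    simp only [SimpleGraph.compl_adj, huv, hfuv, ne_eq, not_false_eq_true, true_and]
    exact not_congr (hf.2 u hu v hv)

theorem IsPartialIso.invFunOn [Nonempty V] [DecidableEq V] {S : Finset V} {f : V → V}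
    (hf : IsPartialIso G S f) : IsPartialIso G (S.image f) (Function.invFunOn f S) := by
  have hinv : ∀ x ∈ S, Function.invFunOn f S (f x) = x :=
    fun x hx => hf.1.leftInvOn_invFunOn hx
  refine ⟨?_, ?_⟩
  · rintro _ hfx _ hfy h
    obtain ⟨x, hx, rfl⟩ := by simpa using hfx
    obtain ⟨y, hy, rfl⟩ := by simpa using hfy
    rw [hinv x hx, hinv y hy] at h
    rw [h]
  · simp only [Finset.mem_image, forall_exists_index, and_imp, forall_apply_eq_imp_iff₂]
    intro x hx y hy
    rw [hinv x hx, hinv y hy]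
    exact (hf.2 x hx y hy).symm

theorem isPartialIso_pair [DecidableEq V] {u v a b : V} (huv : u ≠ v) (hab : a ≠ b)
    (hadj : G.Adj u v ↔ G.Adj a b) :
    IsPartialIso G {u, v} (fun x => if x = u then a else b) := by
  have hvu : v ≠ u := huv.symm
  have hadj' : G.Adj v u ↔ G.Adj b a := by rw [G.adj_comm, hadj, G.adj_comm]
  refine ⟨?_, ?_⟩
  · intro x hx y hy hxy
    simp only [Finset.coe_insert, Finset.coe_singleton, Set.mem_insert_iff,
      Set.mem_singleton_iff] at hx hy
    rcases hx with rfl | rfl <;> rcases hy with rfl | rfl <;> simp_all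
  · intro x hx y hy
    simp only [Finset.mem_insert, Finset.mem_singleton] at hx hy
    rcases hx with rfl | rfl <;> rcases hy with rfl | rfl <;>
      simp [hvu, hadj, hadj']

theorem IBHom.compl (hG : IBHom G) : IBHom Gᶜ := by
  classical
  intro S f hf
  rcases isEmpty_or_nonempty V with hV | hV
  · exact ⟨id, isBimorphism_id, fun x => isEmptyElim x⟩
  have hfG : IsPartialIso G S f := by simpa using hf.compl
  obtain ⟨F, hF, hext⟩ := hG _ _ hfG.invFunOn
  let e := Equiv.ofBijective F hF.1
  refine ⟨e.symm, IsBimorphism.compl_symm hF, fun x hx => ?_⟩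
  rw [Equiv.symm_apply_eq]
  exact ((hext _ (Finset.mem_image_of_mem f hx)).trans (hf.1.leftInvOn_invFunOn hx)).symm

theorem RepM.compl (hm : RepM G) : RepM Gᶜ := by
  obtain ⟨F, hF, u, v, huv, hnadj, hadj⟩ := hm
  let e := Equiv.ofBijective F hF.1
  refine ⟨e.symm, IsBimorphism.compl_symm hF, F u, F v, hadj.ne, ?_, ?_⟩
  · simp [hadj]
  · have hsymm : ∀ x, e.symm (F x) = x := e.symm_apply_apply
    simp [hsymm, huv, hnadj]

theorem IBHom.exists_bimorphism_adj (hG : IBHom G) (hm : RepM G) {u v : V} (huv : u ≠ v)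
    (hnadj : ¬ G.Adj u v) : ∃ F, IsBimorphism G F ∧ G.Adj (F u) (F v) := by
  classical
  obtain ⟨F₀, hF₀, a, b, hab, habn, hF₀ab⟩ := hm
  obtain ⟨F₁, hF₁, hext⟩ :=
    hG _ _ (isPartialIso_pair huv hab (iff_of_false hnadj habn))
  refine ⟨F₀ ∘ F₁, hF₀.comp hF₁, ?_⟩
  simpa [hext u (by simp), hext v (by simp), huv.symm] using hF₀ab

open Classical in
noncomputable def nonAdjPairs (G : SimpleGraph V) (X : Finset V) (F : V → V) :
    Finset (V × V) :=
  {p ∈ X ×ˢ X | p.1 ≠ p.2 ∧ ¬ G.Adj (F p.1) (F p.2)}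

theorem mem_nonAdjPairs {X : Finset V} {F : V → V} {p : V × V} :
    p ∈ nonAdjPairs G X F ↔ p.1 ∈ X ∧ p.2 ∈ X ∧ p.1 ≠ p.2 ∧ ¬ G.Adj (F p.1) (F p.2) := by
  simp [nonAdjPairs, and_assoc]

theorem nonAdjPairs_comp_ssubset {X : Finset V} {F Φ : V → V} (hΦ : IsBimorphism G Φ)
    {u v : V} (huv : (u, v) ∈ nonAdjPairs G X F) (hadj : G.Adj (Φ (F u)) (Φ (F v))) :
    nonAdjPairs G X (Φ ∘ F) ⊂ nonAdjPairs G X F := by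
  refine Finset.ssubset_iff_of_subset (fun p hp => ?_) |>.mpr ⟨(u, v), huv, ?_⟩
  · obtain ⟨h₁, h₂, hne, hp⟩ := mem_nonAdjPairs.mp hp
    exact mem_nonAdjPairs.mpr ⟨h₁, h₂, hne, fun h => hp (hΦ.2 _ _ h)⟩
  · exact fun h => (mem_nonAdjPairs.mp h).2.2.2 hadj

theorem isClique_image_of_nonAdjPairs_eq_empty {X : Finset V} {F : V → V}
    (h : nonAdjPairs G X F = ∅) : G.IsClique (F '' X) := by
  rintro _ ⟨x, hx, rfl⟩ _ ⟨y, hy, rfl⟩ hFxy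
  by_contra hnadj
  have hxy : x ≠ y := fun h => hFxy (congrArg F h)
  simpa [h] using (mem_nonAdjPairs (p := (x, y))).mpr ⟨hx, hy, hxy, hnadj⟩

theorem IBHom.exists_bimorphism_isClique_image (hG : IBHom G) (hm : RepM G) (X : Finset V) :
    ∃ F, IsBimorphism G F ∧ G.IsClique (F '' X) := by
  suffices ∀ F, IsBimorphism G F → ∃ F', IsBimorphism G F' ∧ G.IsClique (F' '' X) from
    this id isBimorphism_id
  intro F hF
  induction hn : (nonAdjPairs G X F).card using Nat.strong_induction_on generalizing F with
  | _ n ih =>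
  obtain hempty | ⟨⟨u, v⟩, huv⟩ := (nonAdjPairs G X F).eq_empty_or_nonempty
  · exact ⟨F, hF, isClique_image_of_nonAdjPairs_eq_empty hempty⟩
  obtain ⟨-, -, hne, hnadj⟩ := mem_nonAdjPairs.mp huv
  obtain ⟨Φ, hΦ, hadj⟩ := hG.exists_bimorphism_adj hm (hF.1.injective.ne hne) hnadj
  exact ih _ (hn ▸ Finset.card_lt_card (nonAdjPairs_comp_ssubset hΦ huv hadj)) _
    (hΦ.comp hF) rfl

end

/-- In an IB-homogeneous graph representing `m`, every finite set is the image under some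
bimorphism of an independent set (i.e. the preimage of `X` is independent). -/
theorem stmt7 {V : Type*} (G : SimpleGraph V) (hG : IBHom G) (hm : RepM G)
    (X : Finset V) :
    ∃ F : V → V, IsBimorphism G F ∧ IsIndep G (F ⁻¹' ↑X) := by
  obtain ⟨H, hH, hclique⟩ := hG.compl.exists_bimorphism_isClique_image hm.compl X
  let e := Equiv.ofBijective H hH.1
  have hsymm : IsBimorphism G e.symm := by simpa using IsBimorphism.compl_symm (e := e) hH
  refine ⟨e.symm, hsymm, ?_⟩
  rw [← Equiv.image_eq_preimage_symm]
  exact G.isClique_compl.mp hclique
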